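/- For integers k₁ ≥ 57 and j₀ = 3k₁, the tail block T = E(0:k₁−1, j₀+1:∞) of the sine-to-cosine coefficient matrix satisfies ‖T‖_F² ≤ 4/(170π²) + (4/π²)·(3/8 + (1/2)·log 2) < (0.543)², hence ‖T‖ < 0.543. -/

import Mathlib

/-!
For `k ≥ 1` and `j - k` odd, `(π/2)·E_{kj} = 1/(j-k) + 1/(j+k)`; with `(1/u + 1/v)² ≤ 2/u² + 2/v²`
and `2/u² ≤ 1/(u-1) - 1/(u+1)` this gives `(π²/4)·E_{kj}² ≤ R_k(j-1) - R_k(j+1)` for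
`R_k(n) = 1/(n-k) + 1/(n+k)` (and `R_0(n) = 1/n`, where `(π/2)·E_{0j} = √2/j`). The nonzero entries
of row `k` lie in one parity class of columns, along which these step-2 differences telescope, so
the tail of row `k` beyond column `3k₁` has squared norm at most `(4/π²)·R_k(3k₁)`. Over the rows
`k ≥ 1` these add up to a block of the harmonic series, at most `log 2`, while row `0` contributes
`1/(3k₁) ≤ 1/170`. The bound on `‖Tb‖` then follows row by row from Cauchy–Schwarz.
-/

open Real

/-- The matrix mapping Fourier sine coefficients to Fourier cosine coefficients
on `[0,1]` (rows `k ≥ 0`, columns `j ≥ 1`; we set column `0` to zero). -/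
noncomputable def Emat (k j : ℕ) : ℝ :=
  if j = 0 then 0
  else if k = 0 then (if Odd j then 2 * Real.sqrt 2 / (j * Real.pi) else 0)
  else if Odd ((j : ℤ) - (k : ℤ)) then
    4 * (j : ℝ) / (((j : ℝ) ^ 2 - (k : ℝ) ^ 2) * Real.pi)
  else 0

open Finset Function

lemma two_div_sq_le_one_div_sub_one_sub {u : ℝ} (hu : 1 < u) :
    2 / u ^ 2 ≤ 1 / (u - 1) - 1 / (u + 1) := by
  have h : 1 / (u - 1) - 1 / (u + 1) = 2 / (u ^ 2 - 1) := by
    rw [div_sub_div _ _ (by linarith) (by linarith)]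
    congr 1 <;> ring
  rw [h]
  gcongr
  · nlinarith
  · linarith

lemma sq_one_div_add_one_div_le {u v : ℝ} (hu : 1 < u) (hv : 1 < v) :
    (1 / u + 1 / v) ^ 2 ≤ (1 / (u - 1) - 1 / (u + 1)) + (1 / (v - 1) - 1 / (v + 1)) := by
  have h : (1 / u + 1 / v) ^ 2 ≤ 2 / u ^ 2 + 2 / v ^ 2 := by
    have := sq_nonneg (1 / u - 1 / v)
    field_simp at this ⊢
    nlinarith
  linarith [two_div_sq_le_one_div_sub_one_sub hu, two_div_sq_le_one_div_sub_one_sub hv]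

noncomputable def rowMajorant (k n : ℕ) : ℝ :=
  if k = 0 then 1 / (n : ℝ) else 1 / ((n : ℝ) - k) + 1 / ((n : ℝ) + k)

lemma rowMajorant_antitoneOn (k : ℕ) : AntitoneOn (rowMajorant k) (Set.Ioi k) := by
  intro m hm n hn hmn
  have hkm : (k : ℝ) < m := by exact_mod_cast hm
  have hmn' : (m : ℝ) ≤ n := by exact_mod_cast hmn
  have hm0 : (0 : ℝ) < m := by linarith [(Nat.cast_nonneg k : (0 : ℝ) ≤ k)]
  unfold rowMajorant
  split_ifs <;> gcongr

lemma rowMajorant_nonneg {k n : ℕ} (hkn : k < n) : 0 ≤ rowMajorant k n := by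
  have : (k : ℝ) < n := by exact_mod_cast hkn
  unfold rowMajorant
  split_ifs
  · positivity
  · have : 0 < (n : ℝ) - k := by linarith
    positivity

lemma Emat_eq_zero_of_even {k j : ℕ} (h : Even (j + k)) : Emat k j = 0 := by
  unfold Emat
  split_ifs with _ hk0 hodd hodd <;> try rfl
  · subst hk0
    exact absurd hodd (by simpa using h)
  · rw [Int.odd_sub, Int.odd_coe_nat, Int.even_coe_nat] at hodd
    exact absurd (Nat.odd_add.mpr hodd) (Nat.not_odd_iff_even.mpr h)

lemma Emat_zero_succ_sq_le {m : ℕ} (hm : 0 < m) :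
    Emat 0 (m + 1) ^ 2 ≤ 4 / π ^ 2 * (rowMajorant 0 m - rowMajorant 0 (m + 2)) := by
  have hm : (1 : ℝ) ≤ m := by exact_mod_cast hm
  have hdiff : rowMajorant 0 m - rowMajorant 0 (m + 2)
      = 1 / ((m + 1 : ℝ) - 1) - 1 / ((m + 1 : ℝ) + 1) := by
    simp only [rowMajorant, if_true]
    push_cast
    ring_nf
  have hE : Emat 0 (m + 1) ^ 2 ≤ 4 / π ^ 2 * (2 / (m + 1 : ℝ) ^ 2) := by
    simp only [Emat, Nat.succ_ne_zero, if_false, if_true]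
    push_cast
    split_ifs
    · refine le_of_eq ?_
      rw [div_pow, mul_pow, mul_pow, sq_sqrt zero_le_two]
      field_simp
      ring
    · rw [zero_pow two_ne_zero]
      positivity
  rw [hdiff]
  refine hE.trans (mul_le_mul_of_nonneg_left ?_ (by positivity))
  exact two_div_sq_le_one_div_sub_one_sub (by linarith)

lemma Emat_succ_sq_le_of_ne_zero {k m : ℕ} (hk0 : k ≠ 0) (hkm : k < m) :
    Emat k (m + 1) ^ 2 ≤ 4 / π ^ 2 * (rowMajorant k m - rowMajorant k (m + 2)) := by
  have hk : (k : ℝ) + 1 ≤ m := by exact_mod_cast hkm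
  have hk1 : (1 : ℝ) ≤ k := by exact_mod_cast Nat.one_le_iff_ne_zero.mpr hk0
  have hdiff : rowMajorant k m - rowMajorant k (m + 2)
      = (1 / ((m + 1 - k : ℝ) - 1) - 1 / ((m + 1 - k : ℝ) + 1))
        + (1 / ((m + 1 + k : ℝ) - 1) - 1 / ((m + 1 + k : ℝ) + 1)) := by
    simp only [rowMajorant, if_neg hk0]
    push_cast
    ring_nf
  have hE : Emat k (m + 1) ^ 2
      ≤ 4 / π ^ 2 * (1 / (m + 1 - k : ℝ) + 1 / (m + 1 + k : ℝ)) ^ 2 := by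
    simp only [Emat, Nat.succ_ne_zero, if_false, if_neg hk0]
    push_cast
    split_ifs
    · have h1 : (m + 1 - k : ℝ) ≠ 0 := by linarith
      have h2 : (m + 1 + k : ℝ) ≠ 0 := by positivity
      have h3 : (m + 1 : ℝ) ^ 2 - (k : ℝ) ^ 2 ≠ 0 := by
        rw [sq_sub_sq]; exact mul_ne_zero h2 h1
      refine le_of_eq ?_
      field_simp
      ring
    · rw [zero_pow two_ne_zero]
      positivity
  rw [hdiff]
  refine hE.trans (mul_le_mul_of_nonneg_left ?_ (by positivity))
  exact sq_one_div_add_one_div_le (by linarith) (by linarith)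

lemma Emat_succ_sq_le {k m : ℕ} (hkm : k < m) :
    Emat k (m + 1) ^ 2 ≤ 4 / π ^ 2 * (rowMajorant k m - rowMajorant k (m + 2)) := by
  rcases eq_or_ne k 0 with rfl | hk0
  · exact Emat_zero_succ_sq_le hkm
  · exact Emat_succ_sq_le_of_ne_zero hk0 hkm

lemma summable_and_tsum_le_of_le_sub {v g : ℕ → ℝ} (hv : ∀ i, 0 ≤ v i) (hg : ∀ i, 0 ≤ g i)
    (hvg : ∀ i, v i ≤ g i - g (i + 1)) : Summable v ∧ ∑' i, v i ≤ g 0 := by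
  have h : ∀ n, ∑ i ∈ range n, v i ≤ g 0 := fun n => calc
    ∑ i ∈ range n, v i ≤ ∑ i ∈ range n, (g i - g (i + 1)) := sum_le_sum fun i _ => hvg i
    _ = g 0 - g n := sum_range_sub' g n
    _ ≤ g 0 := sub_le_self _ (hg n)
  exact ⟨summable_of_sum_range_le hv h, Real.tsum_le_of_sum_range_le hv h⟩

lemma summable_and_tsum_tail_Emat_sq_le {k a : ℕ} (hka : k < a) :
    Summable (fun j => if a + 1 ≤ j then Emat k j ^ 2 else 0) ∧
      ∑' j, (if a + 1 ≤ j then Emat k j ^ 2 else 0) ≤ 4 / π ^ 2 * rowMajorant k a := by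
  set u : ℕ → ℝ := fun j => if a + 1 ≤ j then Emat k j ^ 2 else 0
  -- `b + 1 + 2 * i` runs through the columns `j > a` with `j + k` odd, the only ones with `u j ≠ 0`
  set b := a + (a + k) % 2 with hb
  have he : Injective fun i => b + 1 + 2 * i := fun i i' h => by simp only at h; omega
  have hsupp : support u ⊆ Set.range fun i => b + 1 + 2 * i := by
    intro j hj
    have hja : a + 1 ≤ j := by
      by_contra h
      exact hj (if_neg h)
    have hodd : (j + k) % 2 = 1 := by
      refine Nat.odd_iff.mp (Nat.not_even_iff_odd.mp fun h => hj ?_)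
      simp [u, Emat_eq_zero_of_even h]
    exact ⟨(j - b - 1) / 2, by dsimp only; omega⟩
  have hg : ∀ i, 0 ≤ 4 / π ^ 2 * rowMajorant k (b + 2 * i) := fun i =>
    mul_nonneg (by positivity) (rowMajorant_nonneg (by omega))
  have hvg : ∀ i, u (b + 1 + 2 * i)
      ≤ 4 / π ^ 2 * rowMajorant k (b + 2 * i) - 4 / π ^ 2 * rowMajorant k (b + 2 * (i + 1)) := by
    intro i
    simp only [u, if_pos (by omega : a + 1 ≤ b + 1 + 2 * i), ← mul_sub]
    rw [show b + 1 + 2 * i = b + 2 * i + 1 by ring, show b + 2 * (i + 1) = b + 2 * i + 2 by ring]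
    exact Emat_succ_sq_le (by omega)
  obtain ⟨hsum, hle⟩ := summable_and_tsum_le_of_le_sub (fun i => by positivity) hg hvg
  rw [← he.summable_iff fun j hj => notMem_support.mp (mt (@hsupp j) hj), ← he.tsum_eq hsupp]
  refine ⟨hsum, hle.trans ?_⟩
  gcongr
  exact rowMajorant_antitoneOn k hka (by simp only [Set.mem_Ioi]; omega) (by omega)

lemma sum_range_one_div_add_le_log_sub_log {c : ℝ} (hc : 0 < c) (n : ℕ) :
    ∑ i ∈ range n, 1 / (c + (i + 1)) ≤ log (c + n) - log c := calc
  ∑ i ∈ range n, 1 / (c + (i + 1)) ≤ ∑ i ∈ range n, (log (c + (i + 1 : ℕ)) - log (c + i)) := by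
    refine sum_le_sum fun i _ => ?_
    have h := one_sub_inv_le_log_of_pos (x := (c + (i + 1)) / (c + i)) (by positivity)
    rw [log_div (by positivity) (by positivity), inv_div] at h
    have : 1 - (c + i) / (c + (i + 1)) = 1 / (c + (i + 1)) := by field_simp; ring
    push_cast
    linarith
  _ = log (c + n) - log c := by
    rw [sum_range_sub (fun i : ℕ => log (c + i))]
    simp

lemma sum_range_rowMajorant_le {n : ℕ} (hn : 0 < n) :
    ∑ k ∈ range n, rowMajorant k (3 * n) ≤ 1 / (3 * n) + log 2 := by
  obtain ⟨m, rfl⟩ := Nat.exists_eq_add_one_of_ne_zero hn.ne'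
  have hm : (0 : ℝ) ≤ m := m.cast_nonneg
  have hrow : ∀ i ∈ range m, rowMajorant (i + 1) (3 * (m + 1))
      = 1 / ((2 * m + 2 : ℝ) + ((m - 1 - i : ℕ) + 1)) + 1 / ((3 * m + 3 : ℝ) + (i + 1)) := by
    intro i hi
    have hi : i < m := mem_range.mp hi
    simp only [rowMajorant, Nat.add_one_ne_zero, if_false]
    rw [Nat.cast_sub (by omega), Nat.cast_sub (by omega)]
    push_cast
    ring_nf
  rw [sum_range_succ', sum_congr rfl hrow, sum_add_distrib, sum_range_reflect
    (fun j => 1 / ((2 * m + 2 : ℝ) + (j + 1))) m]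
  have lower := sum_range_one_div_add_le_log_sub_log (c := 2 * m + 2) (by positivity) m
  have upper := sum_range_one_div_add_le_log_sub_log (c := 3 * m + 3) (by positivity) m
  have hlog : log (2 * m + 2 + m) - log (2 * m + 2) + (log (3 * m + 3 + m) - log (3 * m + 3))
      ≤ log 2 := by
    rw [← log_div (by positivity) (by positivity), ← log_div (by positivity) (by positivity),
      ← log_mul (by positivity) (by positivity)]
    refine log_le_log (by positivity) ?_
    rw [div_mul_div_comm, div_le_iff₀ (by positivity)]
    nlinarith
  simp only [rowMajorant, if_true]
  push_cast
  linarith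

lemma sq_tsum_mul_le_tsum_sq_mul_tsum_sq {a b : ℕ → ℝ} (ha : Summable fun j => a j ^ 2)
    (hb : Summable fun j => b j ^ 2) :
    (∑' j, a j * b j) ^ 2 ≤ (∑' j, a j ^ 2) * ∑' j, b j ^ 2 := by
  have hab : Summable fun j => a j * b j := by
    refine (ha.add hb).of_norm_bounded fun j => ?_
    rw [Real.norm_eq_abs, abs_mul]
    nlinarith [sq_nonneg (|a j| - |b j|), sq_abs (a j), sq_abs (b j)]
  exact le_of_tendsto_of_tendsto' (hab.hasSum.tendsto_sum_nat.pow 2)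
    (ha.hasSum.tendsto_sum_nat.mul hb.hasSum.tendsto_sum_nat)
    fun n => sum_mul_sq_le_sq_mul_sq _ _ _

lemma frobenius_constant_lt_sq :
    4 / (170 * π ^ 2) + (4 / π ^ 2) * (3 / 8 + (1 / 2) * log 2) < (0.543 : ℝ) ^ 2 := by
  have hπ := pi_gt_d6
  have hlog := log_two_lt_d9
  have e : 4 / (170 * π ^ 2) + (4 / π ^ 2) * (3 / 8 + (1 / 2) * log 2)
      = (4 / 170 + 3 / 2 + 2 * log 2) / π ^ 2 := by
    field_simp
    ring
  rw [e, div_lt_iff₀ (by positivity)]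
  nlinarith

/-- Case 3: for `k₁ ≥ 57` and `j₀ = 3k₁`, the tail block
`T = E(0:k₁−1, 3k₁+1:∞)` satisfies
`‖T‖_F² ≤ 4/(170π²) + (4/π²)(3/8 + (1/2)log 2) < (0.543)²`; in particular,
for any unit vector `b` the image `Tb` has norm `< 0.543`. -/
theorem tail_block_frobenius_bound (k₁ : ℕ) (hk₁ : 57 ≤ k₁) :
    (∑ k ∈ Finset.range k₁, ∑' j : ℕ,
        (if 3 * k₁ + 1 ≤ j then (Emat k j) ^ 2 else 0))
      ≤ 4 / (170 * Real.pi ^ 2) + (4 / Real.pi ^ 2) * (3 / 8 + (1 / 2) * Real.log 2)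
    ∧ 4 / (170 * Real.pi ^ 2) + (4 / Real.pi ^ 2) * (3 / 8 + (1 / 2) * Real.log 2)
        < (0.543 : ℝ) ^ 2
    ∧ ∀ b : ℕ → ℝ, Summable (fun j => (b j) ^ 2) → (∑' j : ℕ, (b j) ^ 2) ≤ 1 →
        ∑ k ∈ Finset.range k₁,
            (∑' j : ℕ, (if 3 * k₁ + 1 ≤ j then Emat k j * b j else 0)) ^ 2
          < (0.543 : ℝ) ^ 2 := by
  have hrow := fun k (hk : k ∈ range k₁) =>
    summable_and_tsum_tail_Emat_sq_le (k := k) (a := 3 * k₁) (by rw [mem_range] at hk; omega)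
  have hfrob : ∑ k ∈ range k₁, ∑' j, (if 3 * k₁ + 1 ≤ j then Emat k j ^ 2 else 0)
      ≤ 4 / (170 * π ^ 2) + (4 / π ^ 2) * (3 / 8 + (1 / 2) * log 2) := calc
    _ ≤ ∑ k ∈ range k₁, 4 / π ^ 2 * rowMajorant k (3 * k₁) := sum_le_sum fun k hk => (hrow k hk).2
    _ ≤ 4 / π ^ 2 * (1 / (3 * k₁) + log 2) := by
      rw [← mul_sum]
      gcongr
      exact_mod_cast sum_range_rowMajorant_le (by omega)
    _ ≤ 4 / (170 * π ^ 2) + (4 / π ^ 2) * (3 / 8 + (1 / 2) * log 2) := by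
      have hk : (170 : ℝ) ≤ 3 * k₁ := by norm_cast; omega
      have : 1 / (3 * k₁ : ℝ) ≤ 1 / 170 := one_div_le_one_div_of_le (by norm_num) hk
      rw [show 4 / (170 * π ^ 2) = 4 / π ^ 2 * (1 / 170) by ring, ← mul_add]
      gcongr
      linarith [log_two_lt_d9]
  refine ⟨hfrob, frobenius_constant_lt_sq, fun b hb hb1 => lt_of_le_of_lt ?_ frobenius_constant_lt_sq⟩
  refine le_trans (sum_le_sum fun k hk => ?_) hfrob
  have hcs := sq_tsum_mul_le_tsum_sq_mul_tsum_sq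
    (a := fun j => if 3 * k₁ + 1 ≤ j then Emat k j else 0) (by simpa using (hrow k hk).1) hb
  simp only [ite_mul, zero_mul, ite_pow, zero_pow two_ne_zero] at hcs
  exact hcs.trans (mul_le_of_le_one_right (tsum_nonneg fun j => by positivity) hb1)
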